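/- Let n ≥ 1, k ≥ 2, and f : 𝔽_{2^n} → ℤ/2^kℤ. Define g : 𝔽_{2^n} → ℤ/2^kℤ by g(x) = f(x) + 2^{k−2}·ι(Tr(x)) + 2^{k−1}·ι(σ(1,x)). Then f is nega-ℤ_{2^k}-bent if and only if g is ℤ_{2^k}-bent. -/

import Mathlib

noncomputable section

/-- The absolute trace Tr(x) = x + x² + x⁴ + … + x^{2^{n−1}}. -/
def Tr {F : Type} [Field F] (n : ℕ) (x : F) : F :=
  ∑ i ∈ Finset.range n, x ^ (2 ^ i)

/-- σ(c,x) = Σ_{0 ≤ i < j ≤ n−1} (cx)^{2^i} (cx)^{2^j} -/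
def sig {F : Type} [Field F] (n : ℕ) (c x : F) : F :=
  ∑ j ∈ Finset.range n, ∑ i ∈ Finset.range j, (c * x) ^ (2 ^ i) * (c * x) ^ (2 ^ j)

/-- ι(e): the integer lift of e ∈ {0,1} ⊆ F. -/
def iotaN {F : Type} [Field F] [DecidableEq F] (e : F) : ℕ :=
  if e = 1 then 1 else 0

/-- ι(e) viewed in ℤ/2^kℤ. -/
def iotaZ {F : Type} [Field F] [DecidableEq F] (k : ℕ) (e : F) : ZMod (2 ^ k) :=
  if e = 1 then 1 else 0

/-- ζ = e^{2πi/2^k}. -/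
def zeta (k : ℕ) : ℂ := Complex.exp (2 * Real.pi * Complex.I / 2 ^ k)

/-- c₀ ∈ {0,1} ⊆ F equals 1 if c is odd and 0 if c is even. -/
def czero {F : Type} [Field F] (k : ℕ) (c : ZMod (2 ^ k)) : F :=
  if c.val % 2 = 1 then 1 else 0

/-- The generalized Walsh–Hadamard transform
H_f(c,u) = Σ_{x ∈ F} ζ^{c·f(x)} (−1)^{ι(Tr(ux))}. -/
def gWH {F : Type} [Field F] [Fintype F] [DecidableEq F] (n k : ℕ)
    (f : F → ZMod (2 ^ k)) (c : ZMod (2 ^ k)) (u : F) : ℂ :=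
  ∑ x : F, zeta k ^ (c * f x).val * (-1 : ℂ) ^ (iotaN (Tr n (u * x)))

/-- The nega-ℤ_{2^k}-Hadamard transform
K_f(c,u) = Σ_{x ∈ F} (−1)^{ι(Tr(ux)) + ι(σ(c₀,x))} ζ^{c·f(x)} i^{ι(Tr(c₀x))}. -/
def negaK {F : Type} [Field F] [Fintype F] [DecidableEq F] (n k : ℕ)
    (f : F → ZMod (2 ^ k)) (c : ZMod (2 ^ k)) (u : F) : ℂ :=
  ∑ x : F, (-1 : ℂ) ^ (iotaN (Tr n (u * x)) + iotaN (sig n (czero k c) x)) *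
    zeta k ^ (c * f x).val * Complex.I ^ (iotaN (Tr n (czero k c * x)))

/-!
Write c ≡ c₀ + 2c₁ (mod 4). The two extra terms of g contribute
ζ^{c·2^{k−2}·ι(Tr x)} = i^{c·ι(Tr x)} = i^{c₀·ι(Tr x)} (−1)^{c₁·ι(Tr x)} and
ζ^{c·2^{k−1}·ι(σ(1,x))} = (−1)^{c₀·ι(σ(1,x))}. As Tr is additive with values in {0,1}, the factor
(−1)^{c₁·ι(Tr x)} is absorbed by shifting u to u + c₁, so H_g(c,u) = K_f(c, u + c₁) term by term,
and u ↦ u + c₁ is a bijection of F.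
-/

open Complex Finset

lemma zeta_zero : zeta 0 = 1 := by simp [zeta, exp_two_pi_mul_I]

lemma zeta_one : zeta 1 = -1 := by
  rw [zeta]; convert exp_pi_mul_I using 2; ring

lemma zeta_two : zeta 2 = I := by
  rw [zeta]; convert exp_pi_div_two_mul_I using 2; ring

lemma zeta_pow_two_pow_sub {j k : ℕ} (hj : j ≤ k) : zeta k ^ 2 ^ (k - j) = zeta j := by
  have h : (2 : ℂ) ^ (k - j) * 2 ^ j = 2 ^ k := by rw [← pow_add, Nat.sub_add_cancel hj]
  rw [zeta, zeta, ← exp_nat_mul, ← h]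
  push_cast
  congr 1
  field_simp

lemma zeta_pow_val_natCast (k m : ℕ) : zeta k ^ (m : ZMod (2 ^ k)).val = zeta k ^ m := by
  have hperiod := zeta_pow_two_pow_sub (Nat.zero_le k)
  rw [Nat.sub_zero, zeta_zero] at hperiod
  conv_rhs => rw [← Nat.mod_add_div m (2 ^ k)]
  rw [ZMod.val_natCast, pow_add, pow_mul, hperiod, one_pow, mul_one]

lemma zeta_pow_val_add (k : ℕ) (a b : ZMod (2 ^ k)) :
    zeta k ^ (a + b).val = zeta k ^ a.val * zeta k ^ b.val := by
  rw [← pow_add, ← zeta_pow_val_natCast k (a.val + b.val), Nat.cast_add, ZMod.natCast_zmod_val,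
    ZMod.natCast_zmod_val]

lemma zeta_pow_val_mul_two_pow_sub_mul {j k : ℕ} (hj : j ≤ k) (c : ZMod (2 ^ k)) (m : ℕ) :
    zeta k ^ (c * (2 ^ (k - j) * m)).val = zeta j ^ (c.val * m) := by
  have hcast : c * (2 ^ (k - j) * m) = ((2 ^ (k - j) * (c.val * m) : ℕ) : ZMod (2 ^ k)) := by
    push_cast
    rw [ZMod.natCast_zmod_val]
    ring
  rw [hcast, zeta_pow_val_natCast, pow_mul, zeta_pow_two_pow_sub hj]

lemma zeta_pow_val_mul_add_two_pow_mul {k : ℕ} (hk : 2 ≤ k) (c a : ZMod (2 ^ k)) (t s : ℕ) :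
    zeta k ^ (c * (a + 2 ^ (k - 2) * t + 2 ^ (k - 1) * s)).val
      = zeta k ^ (c * a).val * I ^ (c.val * t) * (-1) ^ (c.val * s) := by
  rw [mul_add, mul_add, zeta_pow_val_add, zeta_pow_val_add, zeta_pow_val_mul_two_pow_sub_mul hk,
    zeta_pow_val_mul_two_pow_sub_mul (by omega), zeta_two, zeta_one]

lemma I_pow_mul_mul_neg_one_pow_mul (m t s : ℕ) :
    I ^ (m * t) * (-1) ^ (m * s) = (-1) ^ (m / 2 % 2 * t + m % 2 * s) * I ^ (m % 2 * t) := by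
  have hI : I ^ m = I ^ (m % 2) * (-1) ^ (m / 2 % 2) := by
    rw [← neg_one_pow_eq_pow_mod_two, ← I_sq, ← pow_mul, ← pow_add, Nat.mod_add_div]
  rw [pow_mul, hI, pow_mul (-1 : ℂ), neg_one_pow_eq_pow_mod_two m]
  ring

section TraceBits

variable {F : Type} [Field F]

lemma Tr_zero (n : ℕ) : Tr n (0 : F) = 0 :=
  sum_eq_zero fun _ _ => zero_pow (by positivity)

lemma sig_zero_left (n : ℕ) (x : F) : sig n 0 x = 0 :=
  sum_eq_zero fun _ _ => sum_eq_zero fun _ _ => by simp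

lemma Tr_add [CharP F 2] (n : ℕ) (a b : F) : Tr n (a + b) = Tr n a + Tr n b := by
  rw [Tr, Tr, Tr, ← sum_add_distrib]
  exact sum_congr rfl fun i _ => add_pow_char_pow a b 2 i

-- Frobenius shifts the summands of Tr cyclically, because x ^ 2 ^ n = x.
lemma Tr_sq [Fintype F] [CharP F 2] {n : ℕ} (hF : Fintype.card F = 2 ^ n) (x : F) :
    Tr n x ^ 2 = Tr n x := by
  have hfrob : x ^ 2 ^ n = x := hF ▸ FiniteField.pow_card x
  have hshift := sum_range_succ' (fun i => x ^ 2 ^ i) n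
  rw [sum_range_succ, hfrob, pow_zero, pow_one] at hshift
  rw [Tr, sum_pow_char]
  simp only [← pow_mul, ← pow_succ]
  exact add_right_cancel hshift.symm

lemma Tr_eq_zero_or_one [Fintype F] [CharP F 2] {n : ℕ} (hF : Fintype.card F = 2 ^ n) (x : F) :
    Tr n x = 0 ∨ Tr n x = 1 := by
  have h : Tr n x * (Tr n x - 1) = 0 := by linear_combination Tr_sq hF x
  rcases mul_eq_zero.mp h with h0 | h1
  · exact Or.inl h0
  · exact Or.inr (sub_eq_zero.mp h1)

def parityBit (m : ℕ) : F := if m % 2 = 1 then 1 else 0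

def cOne (k : ℕ) (c : ZMod (2 ^ k)) : F := parityBit (c.val / 2)

lemma czero_eq_parityBit (k : ℕ) (c : ZMod (2 ^ k)) : czero k c = (parityBit c.val : F) := rfl

lemma parityBit_eq_zero_or_one (m : ℕ) : parityBit m = (0 : F) ∨ parityBit m = (1 : F) := by
  unfold parityBit; split <;> simp

variable [DecidableEq F]

lemma iotaN_parityBit (m : ℕ) : iotaN (parityBit m : F) = m % 2 := by
  unfold parityBit iotaN; split <;> simp <;> omega

lemma iotaZ_eq_natCast_iotaN (k : ℕ) (e : F) : iotaZ k e = (iotaN e : ZMod (2 ^ k)) := by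
  unfold iotaZ iotaN; split <;> simp

lemma neg_one_pow_iotaN_add {R : Type*} [Ring R] [CharP F 2] {a b : F}
    (ha : a = 0 ∨ a = 1) (hb : b = 0 ∨ b = 1) :
    (-1 : R) ^ iotaN (a + b) = (-1) ^ (iotaN a + iotaN b) := by
  rcases ha with rfl | rfl <;> rcases hb with rfl | rfl <;> simp [iotaN, CharTwo.add_self_eq_zero]

lemma iotaN_Tr_mul_of_bit {e : F} (he : e = 0 ∨ e = 1) (n : ℕ) (x : F) :
    iotaN (Tr n (e * x)) = iotaN e * iotaN (Tr n x) := by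
  rcases he with rfl | rfl <;> simp [iotaN, Tr_zero]

lemma iotaN_sig_of_bit {e : F} (he : e = 0 ∨ e = 1) (n : ℕ) (x : F) :
    iotaN (sig n e x) = iotaN e * iotaN (sig n 1 x) := by
  rcases he with rfl | rfl <;> simp [iotaN, sig_zero_left]

end TraceBits

theorem gWH_eq_negaK_add_cOne {F : Type} [Field F] [Fintype F] [DecidableEq F] [CharP F 2]
    {n k : ℕ} (hk : 2 ≤ k) (hF : Fintype.card F = 2 ^ n) {f g : F → ZMod (2 ^ k)}
    (hg : ∀ x, g x = f x + 2 ^ (k - 2) * iotaZ k (Tr n x) + 2 ^ (k - 1) * iotaZ k (sig n 1 x))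
    (c : ZMod (2 ^ k)) (u : F) :
    gWH n k g c u = negaK n k f c (u + cOne k c) := by
  have hc₀ := parityBit_eq_zero_or_one (F := F) c.val
  have hc₁ := parityBit_eq_zero_or_one (F := F) (c.val / 2)
  refine sum_congr rfl fun x _ => ?_
  rw [czero_eq_parityBit, cOne, add_mul, Tr_add, pow_add,
    neg_one_pow_iotaN_add (Tr_eq_zero_or_one hF _) (Tr_eq_zero_or_one hF _),
    iotaN_Tr_mul_of_bit hc₁, iotaN_Tr_mul_of_bit hc₀, iotaN_sig_of_bit hc₀,
    iotaN_parityBit, iotaN_parityBit]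
  rw [hg, iotaZ_eq_natCast_iotaN, iotaZ_eq_natCast_iotaN, zeta_pow_val_mul_add_two_pow_mul hk,
    mul_assoc (zeta k ^ _), I_pow_mul_mul_neg_one_pow_mul]
  ring

theorem stmt11_general {F : Type} [Field F] [Fintype F] [DecidableEq F] (n k : ℕ)
    (hk : 2 ≤ k) (hF : Fintype.card F = 2 ^ n)
    (f : F → ZMod (2 ^ k)) (g : F → ZMod (2 ^ k))
    (hg : ∀ x, g x = f x + 2 ^ (k - 2) * iotaZ k (Tr n x) +
      2 ^ (k - 1) * iotaZ k (sig n 1 x)) :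
    (∀ u : F, ∀ c : ZMod (2 ^ k), c ≠ 0 →
        ‖negaK n k f c u‖ = Real.sqrt (2 ^ n)) ↔
      (∀ u : F, ∀ c : ZMod (2 ^ k), c ≠ 0 →
        ‖gWH n k g c u‖ = Real.sqrt (2 ^ n)) := by
  have : CharP F 2 := charP_of_card_eq_prime_pow hF
  rw [forall_comm, @forall_comm F]
  refine forall_congr' fun c => ?_
  simp only [gWH_eq_negaK_add_cOne hk hF hg]
  exact (Equiv.addRight (cOne k c)).forall_congr_right.symm

/-- With g(x) = f(x) + 2^{k−2}·ι(Tr(x)) + 2^{k−1}·ι(σ(1,x)),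
f is nega-ℤ_{2^k}-bent iff g is ℤ_{2^k}-bent. -/
theorem stmt11 {F : Type} [Field F] [Fintype F] [DecidableEq F] (n k : ℕ)
    (hn : 1 ≤ n) (hk : 2 ≤ k) (hF : Fintype.card F = 2 ^ n)
    (f : F → ZMod (2 ^ k)) (g : F → ZMod (2 ^ k))
    (hg : ∀ x, g x = f x + 2 ^ (k - 2) * iotaZ k (Tr n x) +
      2 ^ (k - 1) * iotaZ k (sig n 1 x)) :
    (∀ u : F, ∀ c : ZMod (2 ^ k), c ≠ 0 →
        ‖negaK n k f c u‖ = Real.sqrt (2 ^ n)) ↔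
      (∀ u : F, ∀ c : ZMod (2 ^ k), c ≠ 0 →
        ‖gWH n k g c u‖ = Real.sqrt (2 ^ n)) :=
  stmt11_general n k hk hF f g hg
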